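/- arXiv:1901.06066 — 3 statements merged into one kernel-verified Lean document; each statement's English description precedes it below -/
import Mathlib

section
/- Let [r_0, ..., r_n] be an admissible list of integers and let M = A(r_0)·A(r_1)·...·A(r_n), the product of 2×2 integer matrices taken in order of increasing index, with entries M = [[a, b], [c, d]]. Then det M = 1, a ≥ 1, c ≤ −1, 0 < b ≤ a, and the NCF value of [r_0, ..., r_n] equals a/c. Equivalently, M has the form [[q, q'], [−p, −p']] with p, q positive integers such that −q/p is the NCF value of the list and −q'/q ∈ [−1, 0). -/
/-- The negative continued fraction (NCF) value of a list of integers: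
`ncfVal [rₙ] = rₙ` and `ncfVal (rₖ :: l) = rₖ - 1 / ncfVal l`.
(Junk value `0` for the empty list; recall division by zero in `ℚ` is `0`,
so the value is "well defined" precisely when all proper tails have nonzero value.) -/
def ncfVal : List ℤ → ℚ
  | [] => 0
  | [r] => (r : ℚ)
  | r :: s :: l => (r : ℚ) - 1 / ncfVal (s :: l)

/-- A list `[r₀, …, rₙ]` is admissible if `r₀ ≤ -1` and `rᵢ ≤ -2` for `1 ≤ i ≤ n`. -/
def Admissible : List ℤ → Prop
  | [] => False
  | r :: l => r ≤ -1 ∧ ∀ s ∈ l, s ≤ -2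

/-- The matrix `A(r)` with first row `(-r, 1)` and second row `(-1, 0)`. -/
def A (r : ℤ) : Matrix (Fin 2) (Fin 2) ℤ := !![-r, 1; -1, 0]

lemma entry00 (r : ℤ) (N : Matrix (Fin 2) (Fin 2) ℤ) : (A r * N) 0 0 = -r * N 0 0 + N 1 0 := by
  simp [A, Matrix.mul_apply, Fin.sum_univ_two]
lemma entry01 (r : ℤ) (N : Matrix (Fin 2) (Fin 2) ℤ) : (A r * N) 0 1 = -r * N 0 1 + N 1 1 := by
  simp [A, Matrix.mul_apply, Fin.sum_univ_two]
lemma entry10 (r : ℤ) (N : Matrix (Fin 2) (Fin 2) ℤ) : (A r * N) 1 0 = -N 0 0 := by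
  simp [A, Matrix.mul_apply, Fin.sum_univ_two]
lemma entry11 (r : ℤ) (N : Matrix (Fin 2) (Fin 2) ℤ) : (A r * N) 1 1 = -N 0 1 := by
  simp [A, Matrix.mul_apply, Fin.sum_univ_two]
lemma detA (r : ℤ) : (A r).det = 1 := by
  simp [A, Matrix.det_fin_two_of]

lemma ncf_aux : ∀ (L : List ℤ), L ≠ [] → (∀ s ∈ L, s ≤ -2) →
    (L.map A).prod.det = 1 ∧
    1 ≤ (L.map A).prod 0 0 ∧
    (L.map A).prod 1 0 ≤ -1 ∧
    1 ≤ (L.map A).prod 0 1 ∧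
    (L.map A).prod 1 1 ≤ 0 ∧
    (L.map A).prod 0 1 ≤ (L.map A).prod 0 0 ∧
    (L.map A).prod 0 1 + (L.map A).prod 1 1 ≤ (L.map A).prod 0 0 + (L.map A).prod 1 0 ∧
    1 ≤ (L.map A).prod 0 1 + (L.map A).prod 1 1 ∧
    ncfVal L = ((L.map A).prod 0 0 : ℚ) / ((L.map A).prod 1 0 : ℚ) := by
  intro L
  induction L with
  | nil => intro h; exact absurd rfl h
  | cons r T ih =>
    intro _ hle
    have hr : r ≤ -2 := hle r (by simp)
    match T, ih with
    | [], _ =>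
      refine ⟨?_, ?_, ?_, ?_, ?_, ?_, ?_, ?_, ?_⟩ <;>
        simp [A, ncfVal, Matrix.det_fin_two_of] <;> omega
    | t :: T', ih =>
      obtain ⟨hdet, h00, h10, h01, h11, hba, hsum, hbd, hval⟩ :=
        ih (by simp) (fun s hs => hle s (by simp [hs]))
      set N := ((t :: T').map A).prod with hN
      have hprod : ((r :: t :: T').map A).prod = A r * N := by
        simp [hN]
      rw [hprod, entry00, entry01, entry10, entry11, Matrix.det_mul, detA, hdet]
      have hN00 : (0 : ℚ) < (N 0 0 : ℚ) := by exact_mod_cast lt_of_lt_of_le one_pos h00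
      have hN10 : ((N 1 0 : ℤ) : ℚ) < 0 := by exact_mod_cast lt_of_le_of_lt h10 (by norm_num)
      refine ⟨rfl, by nlinarith, by omega, by nlinarith, by omega, by nlinarith,
        by nlinarith, by nlinarith, ?_⟩
      have : ncfVal (r :: t :: T') = (r : ℚ) - 1 / ncfVal (t :: T') := rfl
      rw [this, hval, one_div_div]
      push_cast
      rw [eq_div_iff (by linarith : -(N 0 0 : ℚ) ≠ 0)]
      field_simp
      ring

lemma ratio_aux (a b : ℤ) (ha : 1 ≤ a) (hb : 0 < b) (hba : b ≤ a) :
    (-1 : ℚ) ≤ -(b : ℚ) / (a : ℚ) ∧ -(b : ℚ) / (a : ℚ) < 0 := by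
  have ha' : (0:ℚ) < (a:ℚ) := by exact_mod_cast lt_of_lt_of_le one_pos ha
  have hb' : (0:ℚ) < (b:ℚ) := by exact_mod_cast hb
  constructor
  · rw [neg_div, neg_le_neg_iff, div_le_one ha']
    exact_mod_cast hba
  · rw [neg_div, neg_lt_zero]
    positivity

/-- For an admissible list `[r₀, …, rₙ]`, the product
`M = A(r₀) ⋯ A(rₙ) = [[a, b], [c, d]]` satisfies `det M = 1`, `a ≥ 1`, `c ≤ -1`,
`0 < b ≤ a`, the NCF value of the list equals `a / c`, and (writing
`M = [[q, q'], [-p, -p']]`) one has `-q'/q ∈ [-1, 0)`. -/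
theorem ncf_matrix_product (L : List ℤ) (h : Admissible L) :
    (L.map A).prod.det = 1 ∧
    1 ≤ (L.map A).prod 0 0 ∧
    (L.map A).prod 1 0 ≤ -1 ∧
    0 < (L.map A).prod 0 1 ∧
    (L.map A).prod 0 1 ≤ (L.map A).prod 0 0 ∧
    ncfVal L = ((L.map A).prod 0 0 : ℚ) / ((L.map A).prod 1 0 : ℚ) ∧
    (-1 : ℚ) ≤ -((L.map A).prod 0 1 : ℚ) / ((L.map A).prod 0 0 : ℚ) ∧
    -((L.map A).prod 0 1 : ℚ) / ((L.map A).prod 0 0 : ℚ) < 0 := by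
  obtain ⟨h1, h2, h3, h4, h5, h6⟩ :
      (L.map A).prod.det = 1 ∧
      1 ≤ (L.map A).prod 0 0 ∧
      (L.map A).prod 1 0 ≤ -1 ∧
      0 < (L.map A).prod 0 1 ∧
      (L.map A).prod 0 1 ≤ (L.map A).prod 0 0 ∧
      ncfVal L = ((L.map A).prod 0 0 : ℚ) / ((L.map A).prod 1 0 : ℚ) := by
    match L, h with
    | [r], ⟨hr, _⟩ =>
      have hp : ([r].map A).prod = A r := by simp
      have e00 : A r 0 0 = -r := by simp [A]
      have e01 : A r 0 1 = 1 := by simp [A]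
      have e10 : A r 1 0 = -1 := by simp [A]
      rw [hp, e00, e01, e10]
      refine ⟨by simp [A, Matrix.det_fin_two_of], by omega, le_refl _, one_pos, by omega, ?_⟩
      show (r : ℚ) = _
      push_cast
      rw [div_neg, div_one, neg_neg]
    | r :: t :: T', ⟨hr, hT⟩ =>
      obtain ⟨hdet, h00, h10, h01, h11, hba, hsum, hbd, hval⟩ :=
        ncf_aux (t :: T') (by simp) hT
      set N := ((t :: T').map A).prod with hN
      have hprod : ((r :: t :: T').map A).prod = A r * N := by simp [hN]
      rw [hprod, entry00, entry01, entry10, Matrix.det_mul, detA, hdet]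
      have hN00 : (0 : ℚ) < (N 0 0 : ℚ) := by exact_mod_cast lt_of_lt_of_le one_pos h00
      have hN10 : ((N 1 0 : ℤ) : ℚ) < 0 := by exact_mod_cast lt_of_le_of_lt h10 (by norm_num)
      refine ⟨rfl, by nlinarith, by omega, by nlinarith, by nlinarith, ?_⟩
      have hrw : ncfVal (r :: t :: T') = (r : ℚ) - 1 / ncfVal (t :: T') := rfl
      rw [hrw, hval, one_div_div]
      push_cast
      rw [eq_div_iff (by linarith : -(N 0 0 : ℚ) ≠ 0)]
      field_simp
      ring
  exact ⟨h1, h2, h3, h4, h5, h6, (ratio_aux _ _ h2 h4 h5).1, (ratio_aux _ _ h2 h4 h5).2⟩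
end

section
/- Let [r_0, ..., r_n] be an admissible list of integers and let M = A(r_0)·A(r_1)·...·A(r_n) = [[a, b], [c, d]]. Then the reversed list [r_n, ..., r_0] has a well-defined NCF value, and this value equals −a/b. In the paper's notation: if A(r_0)···A(r_n) = [[q, q'], [−p, −p']], so that −q/p has NCF expansion [r_0, ..., r_n], then −q/q' has NCF expansion [r_n, ..., r_0]. -/
/-! Writing `P(l) = A(rₙ) ⋯ A(r₀)` for `l = [r₀, …, rₙ]`, we have `P(s :: t) = P(t) · A(s)`, and
the first row of `P(t) · A(s)` is `(-s a - b, a)` when that of `P(t)` is `(a, b)`. This is exactly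
the recursion `v ↦ s - 1 / v` on the ratio `-a / b`, so `ncfVal l = -P(l)₀₀ / P(l)₀₁` as soon as
no division by zero occurs. For the reversed admissible list every tail has value `≤ -1`, since
`s ≤ -2` and `v ≤ -1` give `s - 1 / v ≤ -1`; hence no tail vanishes, and `P` of the reversed
list is `A(r₀) ⋯ A(rₙ)`. -/

def NcfWellDefined (l : List ℤ) : Prop :=
  ∀ k : ℕ, 1 ≤ k → k ≤ l.length - 1 → ncfVal (l.drop k) ≠ 0

lemma ncfVal_cons (s : ℤ) {t : List ℤ} (ht : t ≠ []) :
    ncfVal (s :: t) = s - 1 / ncfVal t := by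
  cases t with
  | nil => exact absurd rfl ht
  | cons _ _ => rfl

namespace NcfWellDefined

lemma of_cons {s : ℤ} {t : List ℤ} (h : NcfWellDefined (s :: t)) : NcfWellDefined t :=
  fun k hk1 hk2 => by simpa using h (k + 1) (by omega) (by simp; omega)

lemma ncfVal_ne_zero_of_cons {s : ℤ} {t : List ℤ} (h : NcfWellDefined (s :: t)) (ht : t ≠ []) :
    ncfVal t ≠ 0 := by
  simpa using h 1 le_rfl (by simpa [Nat.one_le_iff_ne_zero] using ht)

end NcfWellDefined

lemma mul_A_apply_zero_zero (P : Matrix (Fin 2) (Fin 2) ℤ) (s : ℤ) :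
    (P * A s) 0 0 = -s * P 0 0 - P 0 1 := by
  simp only [Matrix.mul_apply, Fin.sum_univ_two, A, Matrix.of_apply, Matrix.cons_val',
    Matrix.cons_val_zero, Matrix.cons_val_one, Matrix.empty_val', Matrix.cons_val_fin_one]
  ring

lemma mul_A_apply_zero_one (P : Matrix (Fin 2) (Fin 2) ℤ) (s : ℤ) :
    (P * A s) 0 1 = P 0 0 := by
  simp [Matrix.mul_apply, Fin.sum_univ_two, A]

theorem ncfVal_eq_neg_div_of_ncfWellDefined {l : List ℤ} (hl : l ≠ []) (h : NcfWellDefined l) :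
    ncfVal l = -((l.reverse.map A).prod 0 0 : ℚ) / ((l.reverse.map A).prod 0 1 : ℚ) := by
  induction l with
  | nil => exact absurd rfl hl
  | cons s t ih =>
    rcases eq_or_ne t [] with rfl | ht
    · simp [ncfVal, A]
    set P := (t.reverse.map A).prod
    have hval : ncfVal t = -(P 0 0 : ℚ) / (P 0 1 : ℚ) := ih ht h.of_cons
    have hP : P 0 0 ≠ 0 := by
      intro h0
      exact h.ncfVal_ne_zero_of_cons ht (by simp [hval, h0])
    have hprod : ((s :: t).reverse.map A).prod = P * A s := by simp [P]
    rw [ncfVal_cons s ht, hval, hprod, mul_A_apply_zero_zero, mul_A_apply_zero_one]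
    push_cast
    field_simp
    ring

lemma ncfVal_append_singleton_le_neg_one {l : List ℤ} {r : ℤ} (hl : ∀ x ∈ l, x ≤ -2)
    (hr : r ≤ -1) : ncfVal (l ++ [r]) ≤ -1 := by
  induction l with
  | nil => simp only [List.nil_append, ncfVal]; exact_mod_cast hr
  | cons s t ih =>
    have hs : (s : ℚ) ≤ -2 := by exact_mod_cast hl s List.mem_cons_self
    have hv : ncfVal (t ++ [r]) ≤ -1 := ih fun x hx => hl x (List.mem_cons_of_mem _ hx)
    have hinv : -1 ≤ 1 / ncfVal (t ++ [r]) := by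
      rw [le_div_iff_of_neg (by linarith)]; linarith
    rw [List.cons_append, ncfVal_cons s (by simp)]
    linarith

lemma ncfWellDefined_append_singleton {l : List ℤ} {r : ℤ} (hl : ∀ x ∈ l, x ≤ -2)
    (hr : r ≤ -1) : NcfWellDefined (l ++ [r]) := by
  intro k _ hk
  rw [List.drop_append_of_le_length (by simpa using hk)]
  have hle : ncfVal (l.drop k ++ [r]) ≤ -1 :=
    ncfVal_append_singleton_le_neg_one (fun x hx => hl x (List.mem_of_mem_drop hx)) hr
  linarith

/-- For an admissible list `[r₀, …, rₙ]` with
`M = A(r₀) ⋯ A(rₙ) = [[a, b], [c, d]]`, the reversed list `[rₙ, …, r₀]` has a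
well-defined NCF value (all proper tails have nonzero value), and this value
equals `-a/b`. -/
theorem ncf_reverse_value (L : List ℤ) (h : Admissible L) :
    (∀ k : ℕ, 1 ≤ k → k ≤ L.length - 1 → ncfVal (L.reverse.drop k) ≠ 0) ∧
    ncfVal L.reverse =
      -((L.map A).prod 0 0 : ℚ) / ((L.map A).prod 0 1 : ℚ) := by
  cases L with
  | nil => exact h.elim
  | cons r l =>
    obtain ⟨hr, hl⟩ := h
    have hwd : NcfWellDefined (r :: l).reverse := by
      rw [List.reverse_cons]
      exact ncfWellDefined_append_singleton (by simpa using hl) hr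
    refine ⟨by simpa [NcfWellDefined] using hwd, ?_⟩
    simpa using ncfVal_eq_neg_div_of_ncfWellDefined (by simp) hwd
end

section
/- Let r be a rational number with r > 1. Then 1/(1−r) < 0, and if [r_0, ..., r_n] is the unique admissible NCF expansion of 1/(1−r), then |r_0 (r_1+1) ⋯ (r_n+1)| = Φ(r). -/
/-- `ncfWeight [r₀, …, rₙ] = |r₀ (r₁+1) ⋯ (rₙ+1)|`. -/
def ncfWeight : List ℤ → ℤ
  | [] => 0
  | r :: l => |r * (l.map (· + 1)).prod|

/-- The function `Φ` of the paper: for `x = p/q ∈ (0,1]`, `Φ(x)` is the weight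
`|r₀ (r₁+1) ⋯ (rₙ+1)|` of the unique admissible list with NCF value `-q/p = -1/x`,
extended to all of `ℚ` by `Φ(r+1) = Φ(r)`; here `x = r - ⌈r⌉ + 1 ∈ (0,1]`. -/
noncomputable def Phi (r : ℚ) : ℤ :=
  letI := Classical.propDecidable
    (∃ L : List ℤ, Admissible L ∧ ncfVal L = -1 / (r - (⌈r⌉ : ℚ) + 1))
  if h : ∃ L : List ℤ, Admissible L ∧ ncfVal L = -1 / (r - (⌈r⌉ : ℚ) + 1) then
    ncfWeight h.choose
  else 0

/-- The function `Ψ` of the paper. -/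
noncomputable def Psi (r : ℚ) : ℤ :=
  if -3 ≤ r then 0 else Phi (-1 / (r + 3))


/-!
The head of an admissible list is the floor of its value, and the tail is the expansion of
`1 / (⌊v⌋ - v)`; this makes admissible expansions unique, and they exist by descent on the
denominator. Writing `r - 1 = x + k` with `x = r - ⌈r⌉ + 1 ∈ (0,1]` and `k ∈ ℕ`, the expansion of
`1/(1-r) = -1/(x+k)` arises from that of `-1/x` by applying `k` times the move
`[a, …] ↦ [-1, a-1, …]`, which changes the product `r₀ (r₁+1) ⋯` only by a sign.
-/

lemma ncfVal_cons_cons (r s : ℤ) (l : List ℤ) :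
    ncfVal (r :: s :: l) = (r : ℚ) - 1 / ncfVal (s :: l) := rfl

lemma sub_one_div_mem_Ioo (a : ℚ) {t : ℚ} (ht : t < -1) : a - 1 / t ∈ Set.Ioo a (a + 1) := by
  have h₀ : 1 / t < 0 := one_div_neg.mpr (by linarith)
  have h₁ : -1 < 1 / t := by rw [lt_div_iff_of_neg (by linarith)]; linarith
  constructor <;> linarith

lemma ncfVal_lt_neg_one {l : List ℤ} (hl : ∀ s ∈ l, s ≤ -2) (hne : l ≠ []) : ncfVal l < -1 := by
  induction l with
  | nil => exact absurd rfl hne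
  | cons b m ih =>
    rw [List.forall_mem_cons] at hl
    have hb : (b : ℚ) ≤ -2 := by exact_mod_cast hl.1
    rcases m with _ | ⟨c, m⟩
    · change (b : ℚ) < -1
      linarith
    · have := (sub_one_div_mem_Ioo b (ih hl.2 (List.cons_ne_nil _ _))).2
      rw [ncfVal_cons_cons]
      linarith

lemma ncfVal_cons_cons_mem_Ioo (a b : ℤ) (m : List ℤ) (hl : ∀ s ∈ b :: m, s ≤ -2) :
    ncfVal (a :: b :: m) ∈ Set.Ioo (a : ℚ) (a + 1) :=
  sub_one_div_mem_Ioo a (ncfVal_lt_neg_one hl (List.cons_ne_nil _ _))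

lemma floor_ncfVal_cons (a : ℤ) {l : List ℤ} (hl : ∀ s ∈ l, s ≤ -2) : ⌊ncfVal (a :: l)⌋ = a := by
  rcases l with _ | ⟨b, m⟩
  · exact Int.floor_intCast a
  · obtain ⟨h₁, h₂⟩ := ncfVal_cons_cons_mem_Ioo a b m hl
    rw [Int.floor_eq_iff]
    exact ⟨h₁.le, h₂⟩

lemma ncfVal_cons_eq_head_iff {a : ℤ} {l : List ℤ} (hl : ∀ s ∈ l, s ≤ -2) :
    ncfVal (a :: l) = a ↔ l = [] := by
  refine ⟨fun h => ?_, fun h => by subst h; rfl⟩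
  rcases l with _ | ⟨b, m⟩
  · rfl
  · exact absurd h (ncfVal_cons_cons_mem_Ioo a b m hl).1.ne'

lemma cons_eq_cons_of_ncfVal_eq {a a' : ℤ} {l l' : List ℤ} (hl : ∀ s ∈ l, s ≤ -2)
    (hl' : ∀ s ∈ l', s ≤ -2) (h : ncfVal (a :: l) = ncfVal (a' :: l')) : a :: l = a' :: l' := by
  have ha : a = a' := by rw [← floor_ncfVal_cons a hl, ← floor_ncfVal_cons a' hl', h]
  subst ha
  induction l generalizing a l' with
  | nil => rw [(ncfVal_cons_eq_head_iff hl').mp h.symm]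
  | cons b m ih =>
    rcases l' with _ | ⟨b', m'⟩
    · exact absurd ((ncfVal_cons_eq_head_iff hl).mp h) (List.cons_ne_nil _ _)
    rw [List.forall_mem_cons] at hl
    have htail : ncfVal (b :: m) = ncfVal (b' :: m') := by
      rw [ncfVal_cons_cons, ncfVal_cons_cons] at h
      simpa using h
    have hb : b = b' := by
      rw [← floor_ncfVal_cons b hl.2, ← floor_ncfVal_cons b' (List.forall_mem_cons.mp hl').2,
        htail]
    subst hb
    rw [ih hl.2 (List.forall_mem_cons.mp hl').2 htail]

theorem ncfVal_injOn_admissible : Set.InjOn ncfVal {L | Admissible L} := by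
  rintro (_ | ⟨a, l⟩) hL (_ | ⟨a', l'⟩) hL' h
  · exact hL.elim
  · exact hL.elim
  · exact hL'.elim
  · exact cons_eq_cons_of_ncfVal_eq hL.2 hL'.2 h

lemma den_inv_lt_den {u : ℚ} (hu₀ : 0 < u) (hu₁ : u < 1) : u⁻¹.den < u.den := by
  have hnum : 0 < u.num := Rat.num_pos.mpr hu₀
  have hlt : u.num < u.den := Rat.num_lt_denom_iff.mpr hu₁
  rw [Rat.den_inv_of_ne_zero hu₀.ne']
  omega

theorem exists_admissible_ncfVal_eq {v : ℚ} (hv : v < 0) : ∃ L, Admissible L ∧ ncfVal L = v := by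
  induction hd : v.den using Nat.strong_induction_on generalizing v with
  | _ d ih =>
  have hfloor : ⌊v⌋ ≤ -1 := by
    have : ⌊v⌋ < 0 := Int.floor_lt.mpr (by exact_mod_cast hv)
    omega
  rcases (Int.fract_nonneg v).eq_or_lt with hfract | hfract
  · refine ⟨[⌊v⌋], ⟨hfloor, by simp⟩, ?_⟩
    change (⌊v⌋ : ℚ) = v
    linarith [Int.floor_add_fract v]
  -- descent: the tail expands `w = -1 / fract v`, whose denominator is the numerator of `fract v`
  set w := -(Int.fract v)⁻¹ with hw
  have hw₁ : w < -1 := by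
    have : 1 < (Int.fract v)⁻¹ := one_lt_inv₀ hfract |>.mpr (Int.fract_lt_one v)
    linarith
  have hwd : w.den < d := by
    rw [hw, Rat.den_neg_eq_den, ← hd, ← Rat.den_intFract v]
    exact den_inv_lt_den hfract (Int.fract_lt_one v)
  obtain ⟨_ | ⟨b, m⟩, hM, hMv⟩ := ih _ hwd (by linarith) rfl
  · exact hM.elim
  have hb : b ≤ -2 := by
    have : ⌊w⌋ < -1 := Int.floor_lt.mpr (by exact_mod_cast hw₁)
    rw [← hMv, floor_ncfVal_cons b hM.2] at this
    omega
  refine ⟨⌊v⌋ :: b :: m, ⟨hfloor, List.forall_mem_cons.mpr ⟨hb, hM.2⟩⟩, ?_⟩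
  rw [ncfVal_cons_cons, hMv, hw, one_div, inv_neg, inv_inv]
  linarith [Int.floor_add_fract v]

-- Since `-1 - 1 / (-1/y - 1) = -1 / (y + 1)`, this turns the expansion of `-1/y` into that of
-- `-1/(y+1)`.
def ncfShift : List ℤ → List ℤ
  | [] => []
  | a :: l => -1 :: (a - 1) :: l

lemma ncfVal_sub_one_cons (a : ℤ) (l : List ℤ) :
    ncfVal ((a - 1) :: l) = ncfVal (a :: l) - 1 := by
  rcases l with _ | ⟨b, l⟩
  · change ((a - 1 : ℤ) : ℚ) = a - 1
    push_cast; ring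
  · rw [ncfVal_cons_cons, ncfVal_cons_cons]
    push_cast; ring

lemma admissible_ncfShift {L : List ℤ} (hL : Admissible L) : Admissible (ncfShift L) := by
  rcases L with _ | ⟨a, l⟩
  · exact hL.elim
  · exact ⟨le_rfl, List.forall_mem_cons.mpr ⟨by linarith [hL.1], hL.2⟩⟩

lemma ncfVal_ncfShift {a : ℤ} {l : List ℤ} {y : ℚ} (hy : y ≠ 0) (hy₁ : y + 1 ≠ 0)
    (h : ncfVal (a :: l) = -1 / y) : ncfVal (ncfShift (a :: l)) = -1 / (y + 1) := by
  have hy' : -1 / y - 1 = -(y + 1) / y := by field_simp; ring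
  rw [ncfShift, ncfVal_cons_cons, ncfVal_sub_one_cons, h, hy']
  field_simp
  ring

lemma ncfWeight_ncfShift (L : List ℤ) : ncfWeight (ncfShift L) = ncfWeight L := by
  rcases L with _ | ⟨a, l⟩
  · rfl
  · simp only [ncfShift, ncfWeight, List.map_cons, List.prod_cons, sub_add_cancel, neg_one_mul,
      abs_neg]

lemma admissible_iterate_ncfShift {L : List ℤ} (hL : Admissible L) (k : ℕ) :
    Admissible (ncfShift^[k] L) := by
  induction k with
  | zero => exact hL
  | succ k ih => rw [Function.iterate_succ_apply']; exact admissible_ncfShift ih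

lemma ncfVal_iterate_ncfShift {L : List ℤ} (hL : Admissible L) {y : ℚ} (hy : 0 < y)
    (h : ncfVal L = -1 / y) (k : ℕ) : ncfVal (ncfShift^[k] L) = -1 / (y + k) := by
  induction k with
  | zero => simpa using h
  | succ k ih =>
    have hk := admissible_iterate_ncfShift hL k
    rcases hal : ncfShift^[k] L with _ | ⟨a, l⟩
    · exact (hal ▸ hk).elim
    rw [Function.iterate_succ_apply', hal, ncfVal_ncfShift (by positivity) (by positivity)
      (hal ▸ ih)]
    push_cast
    ring_nf

lemma ncfWeight_iterate_ncfShift (L : List ℤ) (k : ℕ) :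
    ncfWeight (ncfShift^[k] L) = ncfWeight L :=
  congrFun (Function.iterate_invariant (g := ncfWeight) (funext ncfWeight_ncfShift) k) L

lemma Phi_eq_ncfWeight {r : ℚ} {M : List ℤ} (hM : Admissible M)
    (hMv : ncfVal M = -1 / (r - ⌈r⌉ + 1)) : Phi r = ncfWeight M := by
  have hex : ∃ L : List ℤ, Admissible L ∧ ncfVal L = -1 / (r - ⌈r⌉ + 1) := ⟨M, hM, hMv⟩
  rw [Phi, dif_pos hex,
    ncfVal_injOn_admissible hex.choose_spec.1 hM (hex.choose_spec.2.trans hMv.symm)]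

/-- For rational `r > 1`, `1/(1-r) < 0`, and the weight
`|r₀ (r₁+1) ⋯ (rₙ+1)|` of the unique admissible NCF expansion `[r₀, …, rₙ]` of
`1/(1-r)` equals `Φ(r)`. -/
theorem ncf_weight_eq_phi_of_one_lt (r : ℚ) (hr : 1 < r) :
    1 / (1 - r) < 0 ∧
    ∀ L : List ℤ, Admissible L → ncfVal L = 1 / (1 - r) →
      ncfWeight L = Phi r := by
  refine ⟨one_div_neg.mpr (by linarith), fun L hL hLv => ?_⟩
  have hx : 0 < r - ⌈r⌉ + 1 := by linarith [Int.ceil_lt_add_one r]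
  obtain ⟨k, hk⟩ : ∃ k : ℕ, ⌈r⌉ - 2 = k :=
    Int.eq_ofNat_of_zero_le (by linarith [Int.lt_ceil.mpr (show ((1 : ℤ) : ℚ) < r by simpa)])
  obtain ⟨M, hM, hMv⟩ := exists_admissible_ncfVal_eq (div_neg_of_neg_of_pos neg_one_lt_zero hx)
  have hshift : ncfVal (ncfShift^[k] M) = ncfVal L := by
    rw [ncfVal_iterate_ncfShift hM hx hMv, hLv, ← (by exact_mod_cast hk : (⌈r⌉ - 2 : ℚ) = k),
      div_eq_div_iff (by linarith) (by linarith)]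
    ring
  rw [ncfVal_injOn_admissible hL (admissible_iterate_ncfShift hM k) hshift.symm,
    ncfWeight_iterate_ncfShift, Phi_eq_ncfWeight hM hMv]
end
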